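/- Let A = kQ/I be a gentle algebra. Then its CM-Auslander algebra A^CMA = kQ^CMA/I^CMA, obtained by splitting every arrow on a gentle relation cycle and adjusting the length-two relations, is again a gentle algebra. -/

import Mathlib

/-! ## Combinatorics of bounded quivers, string algebras -/

structure QuivData where
  V : Type
  E : Type
  s : E → V
  t : E → V

namespace QuivData

variable {Q : QuivData}

/-- A (possibly trivial) path: a chosen source vertex together with a list of arrows. -/
structure Pth (Q : QuivData) where
  src : Q.V
  arrows : List Q.E

/-- Target of a path: target of its last arrow, or the source for a trivial path. -/
def Pth.tgt (p : Pth Q) : Q.V := (p.arrows.getLast?).elim p.src Q.t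

/-- A path is valid if consecutive arrows compose and the first arrow starts at `src`. -/
def Pth.valid (p : Pth Q) : Prop :=
  (p.arrows.Chain' fun a b => Q.t a = Q.s b) ∧ ∀ a ∈ p.arrows.head?, Q.s a = p.src

/-- Concatenation of paths (as data). -/
def Pth.comp (p q : Pth Q) : Pth Q := ⟨p.src, p.arrows ++ q.arrows⟩

def Pth.length (p : Pth Q) : ℕ := p.arrows.length

/-- A path is non-trivial if it has at least one arrow. -/
def Pth.Nontriv (p : Pth Q) : Prop := p.arrows ≠ []

/-- Trivial path at a vertex. -/
def triv (Q : QuivData) (v : Q.V) : Pth Q := ⟨v, []⟩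

/-- The length-one path given by an arrow. -/
def single (Q : QuivData) (a : Q.E) : Pth Q := ⟨Q.s a, [a]⟩

/-- A list of arrows lies in the monomial ideal generated by `gens` iff some
non-trivial generator occurs as a contiguous segment. -/
def memL (gens : Set (Pth Q)) (l : List Q.E) : Prop :=
  ∃ r ∈ gens, r.arrows ≠ [] ∧ r.arrows <:+: l

/-- Membership of a path in the monomial ideal generated by `gens`. -/
def memI (gens : Set (Pth Q)) (p : Pth Q) : Prop := memL gens p.arrows

/-- `p` is a generator (minimal relation) of the monomial ideal: it lies in the
ideal but no proper subpath does. -/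
def IsGen (gens : Set (Pth Q)) (p : Pth Q) : Prop :=
  p.valid ∧ memI gens p ∧
  ∀ l : List Q.E, l <:+: p.arrows → l ≠ p.arrows → ¬ memL gens l

/-- `(Q, gens)` is a string quiver. -/
def IsStringQuiver (Q : QuivData) (gens : Set (Pth Q)) : Prop :=
  Finite Q.V ∧ Finite Q.E ∧
  (∀ r ∈ gens, r.valid ∧ 2 ≤ r.length) ∧
  (∀ v : Q.V, {a : Q.E | Q.s a = v}.ncard ≤ 2 ∧ {a : Q.E | Q.t a = v}.ncard ≤ 2) ∧
  (∀ a b c : Q.E, Q.t a = Q.s b → Q.t a = Q.s c →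
    ¬ memL gens [a, b] → ¬ memL gens [a, c] → b = c) ∧
  (∀ a b c : Q.E, Q.t b = Q.s a → Q.t c = Q.s a →
    ¬ memL gens [b, a] → ¬ memL gens [c, a] → b = c) ∧
  (∃ N : ℕ, ∀ p : Pth Q, p.valid → N ≤ p.length → memI gens p)

/-- `(Q, gens)` is a gentle quiver. -/
def IsGentleQuiver (Q : QuivData) (gens : Set (Pth Q)) : Prop :=
  IsStringQuiver Q gens ∧
  (∀ r ∈ gens, r.length = 2) ∧
  (∀ a b c : Q.E, Q.t a = Q.s b → Q.t a = Q.s c →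
    memL gens [a, b] → memL gens [a, c] → b = c) ∧
  (∀ a b c : Q.E, Q.t b = Q.s a → Q.t c = Q.s a →
    memL gens [b, a] → memL gens [c, a] → b = c)

/-- Perfect pair of paths (Chen). -/
def PerfectPair (gens : Set (Pth Q)) (p q : Pth Q) : Prop :=
  p.valid ∧ q.valid ∧ p.Nontriv ∧ q.Nontriv ∧ p.tgt = q.src ∧
  memI gens (p.comp q) ∧
  (∀ r : Pth Q, r.valid → r.Nontriv → p.tgt = r.src → memI gens (p.comp r) →
    q.arrows <+: r.arrows) ∧
  (∀ r : Pth Q, r.valid → r.Nontriv → r.tgt = q.src → memI gens (r.comp q) →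
    p.arrows <:+ r.arrows)

/-- A perfect path sequence, presented cyclically. -/
def IsPPS (gens : Set (Pth Q)) {t : ℕ} (P : ZMod t → Pth Q) : Prop :=
  0 < t ∧ ∀ i, PerfectPair gens (P i) (P (i + 1))

/-- A perfect path: a path occurring in some perfect path sequence. -/
def IsPerfectPath (gens : Set (Pth Q)) (p : Pth Q) : Prop :=
  ∃ (t : ℕ) (P : ZMod t → Pth Q), IsPPS gens P ∧ P 0 = p

/-- Cyclic successor entry in a list. -/
def nextIdx {α : Type} (l : List α) (i : Fin l.length) : α :=
  l.get ⟨((i : ℕ) + 1) % l.length, Nat.mod_lt _ i.pos⟩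

/-- An oriented cycle: closed valid non-trivial path with pairwise distinct arrows. -/
def IsCycle (c : Pth Q) : Prop := c.valid ∧ c.Nontriv ∧ c.arrows.Nodup ∧ c.tgt = c.src

/-- A path lies on a cycle if its arrow sequence is a contiguous segment of
some repetition of the cycle. -/
def OnCycle (c p : Pth Q) : Prop :=
  ∃ k : ℕ, p.arrows <:+: (List.replicate k c.arrows).flatten

/-- A gentle relation cycle: an oriented cycle all of whose consecutive
compositions of length two lie in the ideal, and such that every generator
meeting the cycle has length two. -/
def IsGentleRelCycle (gens : Set (Pth Q)) (c : Pth Q) : Prop :=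
  IsCycle c ∧
  (∀ i : Fin c.arrows.length, memL gens [c.arrows.get i, nextIdx c.arrows i]) ∧
  (∀ r ∈ gens, (∃ a ∈ r.arrows, a ∈ c.arrows) → r.length = 2)

/-- An arrow lying on some gentle relation cycle. -/
def OnGRC (gens : Set (Pth Q)) (a : Q.E) : Prop :=
  ∃ c : Pth Q, IsGentleRelCycle gens c ∧ a ∈ c.arrows

/-- G-condition: every cycle supporting a perfect path sequence is a gentle
relation cycle. -/
def GCondition (Q : QuivData) (gens : Set (Pth Q)) : Prop :=
  ∀ c : Pth Q, IsCycle c →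
    (∃ (t : ℕ) (P : ZMod t → Pth Q), IsPPS gens P ∧ ∀ i, OnCycle c (P i)) →
    IsGentleRelCycle gens c

/-- A presentation of the algebra `A` as `kQ/I` for the monomial ideal generated
by `gens`: a basis indexed by the nonzero paths, multiplying like paths. -/
structure StringAlgPres (k : Type) [Field k] (A : Type) [Ring A] [Algebra k A]
    (Q : QuivData) (gens : Set (Pth Q)) where
  bas : Module.Basis {p : Pth Q // p.valid ∧ ¬ memI gens p} k A
  mul_eq : ∀ (p q : {p : Pth Q // p.valid ∧ ¬ memI gens p})
      (h : (p.1.comp q.1).valid ∧ ¬ memI gens (p.1.comp q.1)),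
      p.1.tgt = q.1.src → bas p * bas q = bas ⟨p.1.comp q.1, h⟩
  mul_zero' : ∀ (p q : {p : Pth Q // p.valid ∧ ¬ memI gens p}),
      (p.1.tgt ≠ q.1.src ∨ memI gens (p.1.comp q.1)) → bas p * bas q = 0
  trivMem : ∀ v : Q.V, (triv Q v).valid ∧ ¬ memI gens (triv Q v)
  one_eq : 1 = ∑ᶠ v : Q.V, bas ⟨triv Q v, trivMem v⟩

end QuivData
/-! ## Gorenstein projective modules and homological notions -/

open CategoryTheory

namespace QuivData

/-- `M` is a Gorenstein-projective module: it is (isomorphic to) the image of a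
differential of a Hom(-,R)-exact acyclic complex of projectives. -/
def IsGP (R : Type) [Ring R] (M : ModuleCat.{0} R) : Prop :=
  ∃ (P : ℤ → ModuleCat.{0} R) (d : ∀ n, P n ⟶ P (n + 1)),
    (∀ n, Projective (P n)) ∧
    (∀ n, LinearMap.range (d n).hom = LinearMap.ker (d (n + 1)).hom) ∧
    (∀ (n : ℤ) (g : P (n + 1) ⟶ ModuleCat.of R R), d n ≫ g = 0 →
      ∃ h : P (n + 1 + 1) ⟶ ModuleCat.of R R, d (n + 1) ≫ h = g) ∧
    Nonempty (M ≃ₗ[R] LinearMap.range (d 0).hom)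

/-- Indecomposability of a module. -/
def IndecM (R : Type) [Ring R] (M : ModuleCat.{0} R) : Prop :=
  Nontrivial M ∧ ∀ N₁ N₂ : Submodule R M, IsCompl N₁ N₂ → N₁ = ⊥ ∨ N₂ = ⊥

/-- CM-finiteness: finitely many iso classes of f.g. indecomposable
Gorenstein-projective modules. -/
def CMFinite (R : Type) [Ring R] : Prop :=
  ∃ (n : ℕ) (rep : Fin n → ModuleCat.{0} R),
    ∀ M : ModuleCat.{0} R, Module.Finite R M → IndecM R M → IsGP R M →
      ∃ i, Nonempty (M ≅ rep i)

/-- CM-freeness: every f.g. Gorenstein-projective module is projective. -/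
def CMFree (R : Type) [Ring R] : Prop :=
  ∀ M : ModuleCat.{0} R, Module.Finite R M → IsGP R M → Projective M

/-- Representation-finiteness: finitely many iso classes of f.g.
indecomposable modules. -/
def RepFinite (R : Type) [Ring R] : Prop :=
  ∃ (n : ℕ) (rep : Fin n → ModuleCat.{0} R),
    ∀ M : ModuleCat.{0} R, Module.Finite R M → IndecM R M →
      ∃ i, Nonempty (M ≅ rep i)

/-- Projective dimension at most `n`. -/
def pdLE (R : Type) [Ring R] : ℕ → ModuleCat.{0} R → Prop
  | 0, M => Projective M
  | (n+1), M => ∃ (P : ModuleCat.{0} R) (f : P ⟶ M), Projective P ∧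
      Function.Surjective f ∧ pdLE R n (ModuleCat.of R (LinearMap.ker f.hom))

/-- Injective dimension at most `n`. -/
def idLE (R : Type) [Ring R] : ℕ → ModuleCat.{0} R → Prop
  | 0, M => Injective M
  | (n+1), M => ∃ (E : ModuleCat.{0} R) (f : M ⟶ E), Injective E ∧
      Function.Injective f ∧ idLE R n (ModuleCat.of R (E ⧸ LinearMap.range f.hom))

/-- Global dimension, valued in `ℕ∞`. -/
noncomputable def glDim (R : Type) [Ring R] : ℕ∞ :=
  sInf {n : ℕ∞ | ∃ m : ℕ, n = m ∧ ∀ M : ModuleCat.{0} R, pdLE R m M}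

/-- Self-injective dimension of `A` as a right `A`-module. -/
noncomputable def selfInjDimR (A : Type) [Ring A] : ℕ∞ :=
  sInf {n : ℕ∞ | ∃ m : ℕ, n = m ∧ idLE Aᵐᵒᵖ m (ModuleCat.of Aᵐᵒᵖ A)}

/-- Irreducibility of a morphism relative to the subcategory of objects
satisfying `P`. -/
def IrrIn {R : Type} [Ring R] (P : ModuleCat.{0} R → Prop) {X Y : ModuleCat.{0} R}
    (f : X ⟶ Y) : Prop :=
  (¬ ∃ g : Y ⟶ X, f ≫ g = 𝟙 X) ∧ (¬ ∃ g : Y ⟶ X, g ≫ f = 𝟙 Y) ∧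
  ∀ (Z : ModuleCat.{0} R) (g : X ⟶ Z) (h : Z ⟶ Y), P Z → f = g ≫ h →
    (∃ r : Z ⟶ X, g ≫ r = 𝟙 X) ∨ (∃ s : Y ⟶ Z, s ≫ h = 𝟙 Y)

/-- Membership in the square of the radical, relative to the subcategory of
objects satisfying `P` (for `X`, `Y` indecomposable). -/
def Rad2 {R : Type} [Ring R] (P : ModuleCat.{0} R → Prop) {X Y : ModuleCat.{0} R}
    (f : X ⟶ Y) : Prop :=
  ∃ (m : ℕ) (Z : Fin m → ModuleCat.{0} R) (g : ∀ i, X ⟶ Z i) (h : ∀ i, Z i ⟶ Y),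
    (∀ i, P (Z i)) ∧ (∀ i, ¬ ∃ r : Z i ⟶ X, g i ≫ r = 𝟙 X) ∧
    (∀ i, ¬ ∃ s : Y ⟶ Z i, s ≫ h i = 𝟙 Y) ∧ f = ∑ i, g i ≫ h i

end QuivData
/-! ## The CM-Auslander construction (gentle splitting), bands, forbidden paths -/

namespace QuivData

variable {Q : QuivData}

/-- The quiver of the CM-Auslander algebra obtained by splitting each arrow
lying on a gentle relation cycle. -/
def CMAQuiv (Q : QuivData) (gens : Set (Pth Q)) : QuivData where
  V := Q.V ⊕ {a : Q.E // OnGRC gens a}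
  E := {a : Q.E // ¬ OnGRC gens a} ⊕ ({a : Q.E // OnGRC gens a} ⊕ {a : Q.E // OnGRC gens a})
  s := fun e => match e with
    | Sum.inl a => Sum.inl (Q.s a.1)
    | Sum.inr (Sum.inl a) => Sum.inl (Q.s a.1)   -- α⁻ : x → v_α
    | Sum.inr (Sum.inr a) => Sum.inr a           -- α⁺ : v_α → y
  t := fun e => match e with
    | Sum.inl a => Sum.inl (Q.t a.1)
    | Sum.inr (Sum.inl a) => Sum.inr a
    | Sum.inr (Sum.inr a) => Sum.inl (Q.t a.1)

open scoped Classical in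
/-- The starred arrow in the interior of a path: split arrows become `α⁻α⁺`. -/
noncomputable def starMid (gens : Set (Pth Q)) (a : Q.E) : List (CMAQuiv Q gens).E :=
  if h : OnGRC gens a then [Sum.inr (Sum.inl ⟨a, h⟩), Sum.inr (Sum.inr ⟨a, h⟩)]
  else [Sum.inl ⟨a, h⟩]

open scoped Classical in
/-- The starred first arrow of a relation: a split arrow becomes `α⁺`. -/
noncomputable def starFirst (gens : Set (Pth Q)) (a : Q.E) : List (CMAQuiv Q gens).E :=
  if h : OnGRC gens a then [Sum.inr (Sum.inr ⟨a, h⟩)] else [Sum.inl ⟨a, h⟩]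

open scoped Classical in
/-- The starred last arrow of a relation: a split arrow becomes `α⁻`. -/
noncomputable def starLast (gens : Set (Pth Q)) (a : Q.E) : List (CMAQuiv Q gens).E :=
  if h : OnGRC gens a then [Sum.inr (Sum.inl ⟨a, h⟩)] else [Sum.inl ⟨a, h⟩]

/-- The starred arrow list of a relation. -/
noncomputable def starList (gens : Set (Pth Q)) (l : List Q.E) : List (CMAQuiv Q gens).E :=
  ((l.zipIdx.map Prod.swap).map fun x =>
    if x.1 = 0 then starFirst gens x.2
    else if x.1 = l.length - 1 then starLast gens x.2
    else starMid gens x.2).flatten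

open scoped Classical in
/-- The source of the starred path. -/
noncomputable def starSrc (gens : Set (Pth Q)) (p : Pth Q) : (CMAQuiv Q gens).V :=
  match p.arrows with
  | [] => Sum.inl p.src
  | a :: _ => if h : OnGRC gens a then Sum.inr ⟨a, h⟩ else Sum.inl p.src

/-- The starred path `℘*` of a relation `℘`. -/
noncomputable def starPath (gens : Set (Pth Q)) (p : Pth Q) : Pth (CMAQuiv Q gens) :=
  ⟨starSrc gens p, starList gens p.arrows⟩

/-- Two arrows consecutive on a common gentle relation cycle. -/
def ConsecGRC (gens : Set (Pth Q)) (α β : Q.E) : Prop :=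
  ∃ c : Pth Q, IsGentleRelCycle gens c ∧
    ∃ i : Fin c.arrows.length, c.arrows.get i = α ∧ nextIdx c.arrows i = β

/-- The relations of the CM-Auslander algebra of a string algebra satisfying
the G-condition: the paths `α⁺β⁻` for consecutive arrows on a gentle relation
cycle, together with the starred relations `℘*`. -/
def CMAgens (Q : QuivData) (gens : Set (Pth Q)) : Set (Pth (CMAQuiv Q gens)) :=
  {r | ∃ (α β : Q.E) (hα : OnGRC gens α) (hβ : OnGRC gens β), ConsecGRC gens α β ∧
        r = ⟨Sum.inr ⟨α, hα⟩, [Sum.inr (Sum.inr ⟨α, hα⟩), Sum.inr (Sum.inl ⟨β, hβ⟩)]⟩} ∪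
  {r | ∃ p : Pth Q, IsGen gens p ∧ r = starPath gens p}

/-- The relations of the CM-Auslander algebra of a gentle algebra: Case 1
(`α⁺β⁻` for consecutive arrows on a gentle relation cycle) and Case 2
(length-two relations neither of whose arrows lies on a gentle relation cycle). -/
def CMAgensG (Q : QuivData) (gens : Set (Pth Q)) : Set (Pth (CMAQuiv Q gens)) :=
  {r | ∃ (α β : Q.E) (hα : OnGRC gens α) (hβ : OnGRC gens β), ConsecGRC gens α β ∧
        r = ⟨Sum.inr ⟨α, hα⟩, [Sum.inr (Sum.inr ⟨α, hα⟩), Sum.inr (Sum.inl ⟨β, hβ⟩)]⟩} ∪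
  {r | ∃ (a b : Q.E) (ha : ¬ OnGRC gens a) (hb : ¬ OnGRC gens b),
        Q.t a = Q.s b ∧ memL gens [a, b] ∧
        r = ⟨Sum.inl (Q.s a), [Sum.inl ⟨a, ha⟩, Sum.inl ⟨b, hb⟩]⟩}

/-! ### Bands -/

/-- Source of a letter (an arrow or a formal inverse of an arrow). -/
def LSrc (Q : QuivData) : Q.E ⊕ Q.E → Q.V
  | Sum.inl a => Q.s a
  | Sum.inr a => Q.t a

/-- Target of a letter. -/
def LTgt (Q : QuivData) : Q.E ⊕ Q.E → Q.V
  | Sum.inl a => Q.t a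
  | Sum.inr a => Q.s a

/-- A composable walk. -/
def IsWalk (Q : QuivData) (l : List (Q.E ⊕ Q.E)) : Prop :=
  l.Chain' fun x y => LTgt Q x = LSrc Q y

/-- A reduced walk: no immediate backtracking. -/
def ReducedW (Q : QuivData) (l : List (Q.E ⊕ Q.E)) : Prop :=
  l.Chain' fun x y => (∀ a, ¬ (x = Sum.inl a ∧ y = Sum.inr a)) ∧
    (∀ a, ¬ (x = Sum.inr a ∧ y = Sum.inl a))

/-- All direct and inverse runs of the walk avoid the ideal. -/
def AvoidsI (Q : QuivData) (gens : Set (Pth Q)) (l : List (Q.E ⊕ Q.E)) : Prop :=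
  (∀ p : List Q.E, (p.map Sum.inl) <:+: l → ¬ memL gens p) ∧
  (∀ p : List Q.E, (p.map Sum.inr) <:+: l → ¬ memL gens p.reverse)

/-- A string: a reduced walk avoiding the ideal. -/
def IsStringWalk (Q : QuivData) (gens : Set (Pth Q)) (l : List (Q.E ⊕ Q.E)) : Prop :=
  IsWalk Q l ∧ ReducedW Q l ∧ AvoidsI Q gens l

/-- A band: a non-empty cyclic string whose square is a string, not a proper
power. -/
def IsBand (Q : QuivData) (gens : Set (Pth Q)) (l : List (Q.E ⊕ Q.E)) : Prop :=
  l ≠ [] ∧ IsStringWalk Q gens (l ++ l) ∧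
  ¬ ∃ (w : List (Q.E ⊕ Q.E)) (m : ℕ), 2 ≤ m ∧ l = (List.replicate m w).flatten

def HasBand (Q : QuivData) (gens : Set (Pth Q)) : Prop := ∃ l, IsBand Q gens l

/-! ### Forbidden paths and threads -/

/-- A forbidden path: either a non-trivial path all of whose consecutive
compositions lie in the ideal, or a trivial forbidden path at a suitable
vertex. -/
def IsForbidden (gens : Set (Pth Q)) (F : Pth Q) : Prop :=
  F.valid ∧
  ((F.arrows ≠ [] ∧ F.arrows.Chain' fun a b => memL gens [a, b]) ∨
   (F.arrows = [] ∧ {a : Q.E | Q.t a = F.src}.Subsingleton ∧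
     {a : Q.E | Q.s a = F.src}.Subsingleton ∧
     ∀ α β : Q.E, Q.t α = F.src → Q.s β = F.src → memL gens [α, β]))

/-- A forbidden thread: a maximal forbidden path. -/
def IsForbThread (gens : Set (Pth Q)) (F : Pth Q) : Prop :=
  IsForbidden gens F ∧
  (∀ (β : Q.E) (a : Q.E), F.arrows.head? = some a → Q.t β = F.src → ¬ memL gens [β, a]) ∧
  (∀ (β : Q.E) (a : Q.E), F.arrows.getLast? = some a → Q.s β = F.tgt → ¬ memL gens [a, β])

end QuivData

/-!
Splitting `α` into `α⁻α⁺` creates vertices `v_α` with exactly one incoming and one outgoing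
arrow, while at the old vertices `α⁻` takes the place of `α` at its source and `α⁺` at its
target, so the local arrow configuration of `Q` is unchanged there. In a gentle quiver the
unique relation starting or ending on a gentle relation cycle continues along that cycle, so a
length-two path through an old vertex is a Case 1 or Case 2 relation exactly when the
underlying path of `Q` is a relation; hence the local gentle conditions transfer. For
finite-dimensionality, contracting every `α⁻α⁺` back to `α` maps a relation-free path to a
relation-free path of `Q` of at least half the length.
-/

namespace QuivData

variable {Q : QuivData} {gens : Set (Pth Q)}

section QuadraticIdeal

variable {G : Set (Pth Q)}

lemma memL_pair_iff (h2 : ∀ r ∈ G, r.length = 2) {x y : Q.E} :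
    memL G [x, y] ↔ ∃ r ∈ G, r.arrows = [x, y] := by
  refine ⟨fun ⟨r, hr, _, hinf⟩ => ⟨r, hr, hinf.sublist.eq_of_length ?_⟩, fun ⟨r, hr, he⟩ => ?_⟩
  · simpa [Pth.length] using h2 r hr
  · exact ⟨r, hr, by simp [he], by rw [he]⟩

lemma not_memL_iff_isChain (h2 : ∀ r ∈ G, r.length = 2) {l : List Q.E} :
    ¬ memL G l ↔ l.IsChain fun x y => ¬ memL G [x, y] := by
  refine ⟨fun h => (List.isChain_isInfix l).imp fun x y hxy hm => h ?_, fun h => ?_⟩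
  · obtain ⟨r, hr, hne, hinf⟩ := hm
    exact ⟨r, hr, hne, hinf.trans hxy⟩
  · rintro ⟨r, hr, -, hinf⟩
    obtain ⟨x, y, hxy⟩ := List.length_eq_two.mp (h2 r hr)
    rw [hxy] at hinf
    exact List.isChain_pair.mp (h.infix hinf) ⟨r, hr, by simp [hxy], by rw [hxy]⟩

end QuadraticIdeal

lemma nextIdx_eq_get_finRotate {α : Type} (l : List α) (i : Fin l.length) :
    nextIdx l i = l.get (finRotate _ i) := by
  have : NeZero l.length := i.neZero
  simp [nextIdx, finRotate_apply, Fin.val_add, Nat.add_mod]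

lemma IsCycle.t_get_eq_s_nextIdx {c : Pth Q} (hc : IsCycle c) (i : Fin c.arrows.length) :
    Q.t (c.arrows.get i) = Q.s (nextIdx c.arrows i) := by
  obtain ⟨⟨hchain, hhead⟩, -, -, hclosed⟩ := hc
  unfold nextIdx
  rcases Nat.lt_or_ge (i + 1) c.arrows.length with hlt | hge
  · simp only [Nat.mod_eq_of_lt hlt, List.get_eq_getElem]
    exact List.isChain_iff_getElem.mp hchain i hlt
  · have hi : (i : ℕ) + 1 = c.arrows.length := by omega
    have hne : c.arrows ≠ [] := List.ne_nil_of_length_pos i.pos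
    have htgt : Q.t (c.arrows.get i) = c.tgt := by
      simp [Pth.tgt, List.getLast?_eq_some_getLast hne, List.getLast_eq_getElem, ← hi]
    have hsrc : Q.s (c.arrows.get ⟨0, i.pos⟩) = c.src :=
      hhead _ (by simp [List.head?_eq_getElem?])
    simp only [hi, Nat.mod_self]
    rw [htgt, hclosed, ← hsrc]

namespace ConsecGRC

variable {α β : Q.E}

lemma t_eq_s (h : ConsecGRC gens α β) : Q.t α = Q.s β := by
  obtain ⟨c, hc, i, rfl, rfl⟩ := h
  exact hc.1.t_get_eq_s_nextIdx i

lemma memL (h : ConsecGRC gens α β) : memL gens [α, β] := by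
  obtain ⟨c, hc, i, rfl, rfl⟩ := h
  exact hc.2.1 i

lemma onGRC_left (h : ConsecGRC gens α β) : OnGRC gens α := by
  obtain ⟨c, hc, i, rfl, -⟩ := h
  exact ⟨c, hc, List.get_mem _ _⟩

lemma onGRC_right (h : ConsecGRC gens α β) : OnGRC gens β := by
  obtain ⟨c, hc, i, -, rfl⟩ := h
  exact ⟨c, hc, by rw [nextIdx_eq_get_finRotate]; exact List.get_mem _ _⟩

end ConsecGRC

namespace IsGentleQuiver

variable {a b : Q.E}

lemma consecGRC_of_onGRC_left (hG : IsGentleQuiver Q gens) (hab : Q.t a = Q.s b)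
    (hm : memL gens [a, b]) (ha : OnGRC gens a) : ConsecGRC gens a b := by
  obtain ⟨c, hc, hmem⟩ := ha
  obtain ⟨i, rfl⟩ := List.mem_iff_get.mp hmem
  obtain rfl : b = nextIdx c.arrows i :=
    hG.2.2.1 _ _ _ hab (hc.1.t_get_eq_s_nextIdx i) hm (hc.2.1 i)
  exact ⟨c, hc, i, rfl, rfl⟩

lemma consecGRC_of_onGRC_right (hG : IsGentleQuiver Q gens) (hab : Q.t a = Q.s b)
    (hm : memL gens [a, b]) (hb : OnGRC gens b) : ConsecGRC gens a b := by
  obtain ⟨c, hc, hmem⟩ := hb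
  obtain ⟨i, rfl⟩ := List.mem_iff_get.mp hmem
  set j := (finRotate _).symm i
  have hj : nextIdx c.arrows j = c.arrows.get i := by
    rw [nextIdx_eq_get_finRotate, Equiv.apply_symm_apply]
  obtain rfl : a = c.arrows.get j := by
    refine hG.2.2.2 _ _ _ hab ?_ hm ?_
    · rw [hc.1.t_get_eq_s_nextIdx j, hj]
    · simpa [hj] using hc.2.1 j
  exact ⟨c, hc, j, rfl, hj⟩

variable {c : Q.E}

lemma succ_unique (hG : IsGentleQuiver Q gens) (hb : Q.t a = Q.s b) (hc : Q.t a = Q.s c)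
    (h : memL gens [a, b] ↔ memL gens [a, c]) : b = c := by
  by_cases hab : memL gens [a, b]
  · exact hG.2.2.1 a b c hb hc hab (h.mp hab)
  · exact hG.1.2.2.2.2.1 a b c hb hc hab (h.not.mp hab)

lemma pred_unique (hG : IsGentleQuiver Q gens) (hb : Q.t b = Q.s a) (hc : Q.t c = Q.s a)
    (h : memL gens [b, a] ↔ memL gens [c, a]) : b = c := by
  by_cases hba : memL gens [b, a]
  · exact hG.2.2.2 a b c hb hc hba (h.mp hba)
  · exact hG.1.2.2.2.2.2.1 a b c hb hc hba (h.not.mp hba)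

end IsGentleQuiver

namespace CMAQuiv

def baseArrow : (CMAQuiv Q gens).E → Q.E
  | Sum.inl a => a.1
  | Sum.inr (Sum.inl a) => a.1
  | Sum.inr (Sum.inr a) => a.1

variable {v : Q.V} {w : {a : Q.E // OnGRC gens a}} {x y : (CMAQuiv Q gens).E}

lemma s_baseArrow (h : (CMAQuiv Q gens).s x = Sum.inl v) : Q.s (baseArrow x) = v := by
  rcases x with a | a | a <;> simp_all [CMAQuiv, baseArrow]

lemma t_baseArrow (h : (CMAQuiv Q gens).t x = Sum.inl v) : Q.t (baseArrow x) = v := by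
  rcases x with a | a | a <;> simp_all [CMAQuiv, baseArrow]

lemma eq_of_s_eq_inr (h : (CMAQuiv Q gens).s x = Sum.inr w) : x = Sum.inr (Sum.inr w) := by
  rcases x with a | a | a <;> simp_all [CMAQuiv]

lemma eq_of_t_eq_inr (h : (CMAQuiv Q gens).t x = Sum.inr w) : x = Sum.inr (Sum.inl w) := by
  rcases x with a | a | a <;> simp_all [CMAQuiv]

lemma baseArrow_injOn_s (hx : (CMAQuiv Q gens).s x = Sum.inl v)
    (hy : (CMAQuiv Q gens).s y = Sum.inl v) (h : baseArrow x = baseArrow y) : x = y := by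
  rcases x with a | a | a <;> rcases y with b | b | b <;>
    simp_all [CMAQuiv, baseArrow, Subtype.ext_iff]
  all_goals first | exact a.2 (h ▸ b.2) | exact b.2 (h ▸ a.2)

lemma baseArrow_injOn_t (hx : (CMAQuiv Q gens).t x = Sum.inl v)
    (hy : (CMAQuiv Q gens).t y = Sum.inl v) (h : baseArrow x = baseArrow y) : x = y := by
  rcases x with a | a | a <;> rcases y with b | b | b <;>
    simp_all [CMAQuiv, baseArrow, Subtype.ext_iff]
  all_goals first | exact a.2 (h ▸ b.2) | exact b.2 (h ▸ a.2)

lemma valid_of_mem_CMAgensG {r : Pth (CMAQuiv Q gens)} (hr : r ∈ CMAgensG Q gens) :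
    r.valid ∧ r.length = 2 := by
  rcases hr with ⟨α, β, hα, hβ, hcon, rfl⟩ | ⟨a, b, ha, hb, hab, -, rfl⟩
  · exact ⟨⟨List.isChain_pair.mpr (congrArg Sum.inl hcon.t_eq_s), by rintro _ ⟨⟩; rfl⟩, rfl⟩
  · exact ⟨⟨List.isChain_pair.mpr (congrArg Sum.inl hab), by rintro _ ⟨⟩; rfl⟩, rfl⟩

lemma memL_CMAgensG_iff (hG : IsGentleQuiver Q gens) (hx : (CMAQuiv Q gens).t x = Sum.inl v)
    (hy : (CMAQuiv Q gens).s y = Sum.inl v) :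
    memL (CMAgensG Q gens) [x, y] ↔ memL gens [baseArrow x, baseArrow y] := by
  have hlen : ∀ r ∈ CMAgensG Q gens, r.length = 2 := fun r hr => (valid_of_mem_CMAgensG hr).2
  constructor
  · intro hm
    obtain ⟨r, hr, he⟩ := (memL_pair_iff hlen).mp hm
    rcases hr with ⟨α, β, hα, hβ, hcon, rfl⟩ | ⟨a, b, ha, hb, -, hab, rfl⟩ <;>
      simp only at he <;> obtain ⟨rfl, rfl⟩ := he
    · exact hcon.memL
    · exact hab
  · intro hm
    have hts : Q.t (baseArrow x) = Q.s (baseArrow y) := by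
      rw [t_baseArrow hx, s_baseArrow hy]
    rcases x with a | α | α
    · rcases y with b | β | β
      · exact (memL_pair_iff hlen).mpr ⟨_, Or.inr ⟨a, b, a.2, b.2, hts, hm, rfl⟩, rfl⟩
      · exact absurd (IsGentleQuiver.consecGRC_of_onGRC_right hG hts hm β.2).onGRC_left a.2
      · simp [CMAQuiv] at hy
    · simp [CMAQuiv] at hx
    · have hcon := IsGentleQuiver.consecGRC_of_onGRC_left hG hts hm α.2
      rcases y with b | β | β
      · exact absurd hcon.onGRC_right b.2
      · exact (memL_pair_iff hlen).mpr ⟨_, Or.inl ⟨α, β, α.2, β.2, hcon, rfl⟩, rfl⟩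
      · simp [CMAQuiv] at hy

variable {a b c : (CMAQuiv Q gens).E}

lemma succ_unique (hG : IsGentleQuiver Q gens) (hb : (CMAQuiv Q gens).t a = (CMAQuiv Q gens).s b)
    (hc : (CMAQuiv Q gens).t a = (CMAQuiv Q gens).s c)
    (h : memL (CMAgensG Q gens) [a, b] ↔ memL (CMAgensG Q gens) [a, c]) : b = c := by
  rcases ha : (CMAQuiv Q gens).t a with v | w <;> rw [ha] at hb hc
  · refine baseArrow_injOn_s hb.symm hc.symm (hG.succ_unique (a := baseArrow a) ?_ ?_ ?_)
    · rw [t_baseArrow ha, s_baseArrow hb.symm]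
    · rw [t_baseArrow ha, s_baseArrow hc.symm]
    · rwa [memL_CMAgensG_iff hG ha hb.symm, memL_CMAgensG_iff hG ha hc.symm] at h
  · rw [eq_of_s_eq_inr hb.symm, eq_of_s_eq_inr hc.symm]

lemma pred_unique (hG : IsGentleQuiver Q gens) (hb : (CMAQuiv Q gens).t b = (CMAQuiv Q gens).s a)
    (hc : (CMAQuiv Q gens).t c = (CMAQuiv Q gens).s a)
    (h : memL (CMAgensG Q gens) [b, a] ↔ memL (CMAgensG Q gens) [c, a]) : b = c := by
  rcases ha : (CMAQuiv Q gens).s a with v | w <;> rw [ha] at hb hc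
  · refine baseArrow_injOn_t hb hc (hG.pred_unique (a := baseArrow a) ?_ ?_ ?_)
    · rw [t_baseArrow hb, s_baseArrow ha]
    · rw [t_baseArrow hc, s_baseArrow ha]
    · rwa [memL_CMAgensG_iff hG hb ha, memL_CMAgensG_iff hG hc ha] at h
  · rw [eq_of_t_eq_inr hb, eq_of_t_eq_inr hc]

lemma degree_le_two [Finite Q.E]
    (hdeg : ∀ v : Q.V, {a : Q.E | Q.s a = v}.ncard ≤ 2 ∧ {a : Q.E | Q.t a = v}.ncard ≤ 2)
    (v : (CMAQuiv Q gens).V) :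
    {e | (CMAQuiv Q gens).s e = v}.ncard ≤ 2 ∧ {e | (CMAQuiv Q gens).t e = v}.ncard ≤ 2 := by
  rcases v with v | w
  · refine ⟨le_trans ?_ (hdeg v).1, le_trans ?_ (hdeg v).2⟩
    · exact Set.ncard_le_ncard_of_injOn baseArrow (fun e he => s_baseArrow he)
        fun x hx y hy => baseArrow_injOn_s hx hy
    · exact Set.ncard_le_ncard_of_injOn baseArrow (fun e he => t_baseArrow he)
        fun x hx y hy => baseArrow_injOn_t hx hy
  · have hs : {e | (CMAQuiv Q gens).s e = Sum.inr w}.Subsingleton := fun x hx y hy =>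
      (eq_of_s_eq_inr hx).trans (eq_of_s_eq_inr hy).symm
    have ht : {e | (CMAQuiv Q gens).t e = Sum.inr w}.Subsingleton := fun x hx y hy =>
      (eq_of_t_eq_inr hx).trans (eq_of_t_eq_inr hy).symm
    exact ⟨((Set.ncard_le_one hs.finite).mpr hs).trans one_le_two,
      ((Set.ncard_le_one ht.finite).mpr ht).trans one_le_two⟩

def contractArrow : (CMAQuiv Q gens).E → Option Q.E
  | Sum.inl a => some a.1
  | Sum.inr (Sum.inl _) => none
  | Sum.inr (Sum.inr a) => some a.1

variable {l : List (CMAQuiv Q gens).E}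

lemma contractArrow_eq_some {a : Q.E} (h : contractArrow x = some a) :
    baseArrow x = a ∧ (CMAQuiv Q gens).t x = Sum.inl (Q.t a) := by
  rcases x with b | b | b <;> simp_all [contractArrow, baseArrow, CMAQuiv]

lemma contractArrow_eq_none (h : contractArrow x = none) :
    ∃ w, (CMAQuiv Q gens).t x = Sum.inr w ∧ baseArrow x = w.1 := by
  rcases x with b | b | b <;> simp_all [contractArrow, baseArrow, CMAQuiv]

lemma length_le_contract
    (hl : l.IsChain fun x y => (CMAQuiv Q gens).t x = (CMAQuiv Q gens).s y) :
    l.length ≤ 2 * (l.filterMap contractArrow).length + 1 ∧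
      ∀ x ∈ l.head?, (contractArrow x).isSome →
        l.length ≤ 2 * (l.filterMap contractArrow).length := by
  induction l with
  | nil => simp
  | cons x rest ih =>
    obtain ⟨ih, ih'⟩ := ih hl.tail
    cases hx : contractArrow x with
    | some a =>
      simp only [List.filterMap_cons_some hx, List.length_cons]
      exact ⟨by omega, fun _ _ _ => by omega⟩
    | none =>
      obtain ⟨w, hxt, -⟩ := contractArrow_eq_none hx
      rw [List.filterMap_cons_none hx]
      refine ⟨?_, by simp [hx]⟩
      rcases rest with _ | ⟨e, rest⟩
      · simp
      · obtain rfl := eq_of_s_eq_inr ((hl.rel_head? rfl).symm.trans hxt)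
        have := ih' _ rfl rfl
        simp only [List.length_cons] at this ⊢
        omega

lemma isChain_contract (hG : IsGentleQuiver Q gens)
    (hl : l.IsChain fun x y => (CMAQuiv Q gens).t x = (CMAQuiv Q gens).s y)
    (hfree : l.IsChain fun x y => ¬ memL (CMAgensG Q gens) [x, y]) :
    (l.filterMap contractArrow).IsChain (fun a b => Q.t a = Q.s b ∧ ¬ memL gens [a, b]) ∧
      ∀ b ∈ (l.filterMap contractArrow).head?, ∃ e ∈ l.head?, baseArrow e = b := by
  induction l with
  | nil => simp
  | cons x rest ih =>
    obtain ⟨ih, ih'⟩ := ih hl.tail hfree.tail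
    cases hx : contractArrow x with
    | none =>
      obtain ⟨w, hxt, hxw⟩ := contractArrow_eq_none hx
      rw [List.filterMap_cons_none hx]
      refine ⟨ih, fun b hb => ?_⟩
      obtain ⟨e, he, rfl⟩ := ih' b hb
      obtain rfl := eq_of_s_eq_inr ((hl.rel_head? he).symm.trans hxt)
      exact ⟨x, rfl, hxw⟩
    | some a =>
      obtain ⟨rfl, hxt⟩ := contractArrow_eq_some hx
      rw [List.filterMap_cons_some hx]
      refine ⟨ih.cons fun b hb => ?_, fun b hb => ⟨x, rfl, by simpa using hb⟩⟩
      obtain ⟨e, he, rfl⟩ := ih' b hb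
      have hes : (CMAQuiv Q gens).s e = Sum.inl (Q.t (baseArrow x)) := (hl.rel_head? he) ▸ hxt
      exact ⟨(s_baseArrow hes).symm,
        fun hm => hfree.rel_head? he ((memL_CMAgensG_iff hG hxt hes).mpr hm)⟩

lemma bounded (hG : IsGentleQuiver Q gens) :
    ∃ N : ℕ, ∀ p : Pth (CMAQuiv Q gens), p.valid → N ≤ p.length → memI (CMAgensG Q gens) p := by
  obtain ⟨N, hN⟩ := hG.1.2.2.2.2.2.2
  refine ⟨2 * N + 2, fun p hp hlen => by_contra fun hp' => ?_⟩
  have hfree := (not_memL_iff_isChain fun r hr => (valid_of_mem_CMAgensG hr).2).mp hp'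
  obtain ⟨hq, -⟩ := isChain_contract hG hp.1 hfree
  have hqlen := (length_le_contract hp.1).1
  rcases hqd : p.arrows.filterMap contractArrow with _ | ⟨b, q⟩ <;> rw [hqd] at hq hqlen
  · simp only [Pth.length, List.length_nil] at hqlen hlen
    omega
  refine (not_memL_iff_isChain hG.2.1).mpr (hq.imp fun _ _ h => h.2)
    (hN ⟨Q.s b, b :: q⟩ ⟨hq.imp fun _ _ h => h.1, by simp⟩ ?_)
  simp only [Pth.length, List.length_cons] at hlen hqlen ⊢
  omega

end CMAQuiv

end QuivData

open QuivData in
/-- Corollary 4.6: the CM-Auslander construction applied to a gentle quiver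
(splitting the arrows on gentle relation cycles, with Case 1 and Case 2
relations) yields again a gentle quiver; hence the CM-Auslander algebra of a
gentle algebra is gentle. -/
theorem cma_of_gentle_is_gentle (Q : QuivData) (gens : Set (Pth Q))
    (hG : IsGentleQuiver Q gens) :
    IsGentleQuiver (CMAQuiv Q gens) (CMAgensG Q gens) := by
  have : Finite Q.V := hG.1.1
  have : Finite Q.E := hG.1.2.1
  have hvalid := fun r (hr : r ∈ CMAgensG Q gens) => CMAQuiv.valid_of_mem_CMAgensG hr
  refine ⟨⟨inferInstanceAs (Finite (_ ⊕ _)), inferInstanceAs (Finite (_ ⊕ _)),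
      fun r hr => ⟨(hvalid r hr).1, (hvalid r hr).2.ge⟩,
      CMAQuiv.degree_le_two hG.1.2.2.2.1,
      fun _ _ _ hb hc nb nc => CMAQuiv.succ_unique hG hb hc (iff_of_false nb nc),
      fun _ _ _ hb hc nb nc => CMAQuiv.pred_unique hG hb hc (iff_of_false nb nc),
      CMAQuiv.bounded hG⟩,
    fun r hr => (hvalid r hr).2,
    fun _ _ _ hb hc mb mc => CMAQuiv.succ_unique hG hb hc (iff_of_true mb mc),
    fun _ _ _ hb hc mb mc => CMAQuiv.pred_unique hG hb hc (iff_of_true mb mc)⟩
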